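/- For every function f : ℕ+ → ℕ+, the group 𝒬(f) is trivial if and only if every forward orbit of f contains 1. -/

import Mathlib

/-- The relators of the presentation `𝒬(f)`: the word `a₁`, together with the words
`a_{i+1} a_{f(i+1)}⁻¹` for `i ∈ ℕ+`. -/
def Qrels (f : ℕ+ → ℕ+) : Set (FreeGroup ℕ+) :=
  {FreeGroup.of 1} ∪
    {r | ∃ i : ℕ+, r = FreeGroup.of (i + 1) * (FreeGroup.of (f (i + 1)))⁻¹}

/-!
The relations kill `a₁` and identify `a_j` with `a_{f j}` for every `j ≠ 1`. Hence a generator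
whose orbit reaches `1` is trivial. Conversely, `j ↦ [the orbit of j avoids 1]` is constant
along `f` away from `1` and vanishes at `1`, so it defines a homomorphism `𝒬(f) → ℤ`, which is
nonzero on `a_i` whenever the orbit of `i` avoids `1`.
-/

theorem Function.exists_iterate_apply_eq_iff_of_ne {α : Type*} {f : α → α} {a b : α}
    (hab : a ≠ b) : (∃ n, f^[n] (f a) = b) ↔ ∃ n, f^[n] a = b := by
  refine ⟨fun ⟨n, hn⟩ => ⟨n + 1, hn⟩, ?_⟩
  rintro ⟨_ | n, hn⟩
  · exact absurd hn hab
  · exact ⟨n, hn⟩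

namespace Qrels

variable {f : ℕ+ → ℕ+}

theorem of_one : (PresentedGroup.of 1 : PresentedGroup (Qrels f)) = 1 :=
  PresentedGroup.one_of_mem (Or.inl rfl)

theorem of_eq_of_apply {j : ℕ+} (hj : j ≠ 1) :
    (PresentedGroup.of j : PresentedGroup (Qrels f)) = PresentedGroup.of (f j) := by
  obtain ⟨i, rfl⟩ := PNat.exists_eq_succ_of_ne_one hj
  exact PresentedGroup.mk_eq_mk_of_mul_inv_mem (Or.inr ⟨i, rfl⟩)

theorem of_eq_one_of_iterate_eq_one {n : ℕ} {j : ℕ+} (h : f^[n] j = 1) :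
    (PresentedGroup.of j : PresentedGroup (Qrels f)) = 1 := by
  induction n generalizing j with
  | zero => subst h; exact of_one
  | succ n ih =>
    rcases eq_or_ne j 1 with rfl | hj
    · exact of_one
    · rw [of_eq_of_apply hj]
      exact ih h

theorem lift_eq_one_of_mem {G : Type*} [Group G] {φ : ℕ+ → G} (h1 : φ 1 = 1)
    (hφ : ∀ j ≠ 1, φ (f j) = φ j) : ∀ r ∈ Qrels f, FreeGroup.lift φ r = 1 := by
  rintro r (rfl | ⟨i, rfl⟩)
  · simpa using h1
  · simp [hφ (i + 1) (PNat.lt_add_left 1 i).ne']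

end Qrels

theorem stmt_17 (f : ℕ+ → ℕ+) :
    (∀ g : PresentedGroup (Qrels f), g = 1) ↔
      ∀ i : ℕ+, ∃ n : ℕ, f^[n] i = 1 := by
  classical
  constructor
  · intro htriv i
    by_contra hi
    let φ : ℕ+ → Multiplicative ℤ := fun j =>
      if ∃ n, f^[n] j = 1 then 1 else Multiplicative.ofAdd 1
    have hrels : ∀ r ∈ Qrels f, FreeGroup.lift φ r = 1 :=
      Qrels.lift_eq_one_of_mem (if_pos ⟨0, rfl⟩) fun j hj => by
        simp only [φ, Function.exists_iterate_apply_eq_iff_of_ne hj]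
    have hφi := congrArg (PresentedGroup.toGroup hrels) (htriv (.of i))
    simp [φ, hi] at hφi
  · intro horb g
    refine Subgroup.mem_bot.mp (PresentedGroup.generated_by _ ⊥ (fun j => ?_) g)
    obtain ⟨n, hn⟩ := horb j
    exact Subgroup.mem_bot.mpr (Qrels.of_eq_one_of_iterate_eq_one hn)
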